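/- For general k ≥ 1, define {c_n} as the concatenation of k-fold repetitions of the Fibonacci-substitution words, a_n = (k+1) + Σ_{i<n} c_i and b_n = (2k+2) + Σ_{i<n}(c_i + 1). Then b_n = a_n + n + k for all n ≥ 1, and a_{k(F_{n+1}−1)+hF_n+t+1} = kF_{n+2} − k + 1 + hF_{n+1} + ⌊(F_{n+1}+1+t)φ⌋ − ⌊(F_{n+1}+1)φ⌋ for all n ≥ 1, 0 ≤ h ≤ k−1, 1 ≤ t ≤ F_n. -/

import Mathlib

noncomputable def phi : ℝ := (1 + Real.sqrt 5) / 2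

/-- The substitution σ: 1 ↦ (2), 2 ↦ (2,1). -/
def subst : ℕ → List ℕ
  | 1 => [2]
  | 2 => [2, 1]
  | _ => []

/-- `fibWord n` is the Fibonacci-substitution word `C_{n+1}` (so `fibWord 0 = C₁ = [1]`). -/
def fibWord : ℕ → List ℕ
  | 0 => [1]
  | n + 1 => (fibWord n).flatMap subst

/-- `cseq k n` is the `n`-th term (1-indexed) of the concatenation
    `C₁^(k) ⊎ C₂^(k) ⊎ …` of `k`-fold repetitions of the Fibonacci-substitution words. -/
def cseq (k n : ℕ) : ℕ :=
  ((List.range n).flatMap fun i => (List.replicate k (fibWord i)).flatten).getD (n - 1) 0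

/-- `aseq k n = (k+1) + Σ_{i=1}^{n-1} c_i`. -/
def aseq (k n : ℕ) : ℕ := (k + 1) + ∑ i ∈ Finset.Ico 1 n, cseq k i

/-- `bseq k n = (2k+2) + Σ_{i=1}^{n-1} (c_i + 1)`. -/
def bseq (k n : ℕ) : ℕ := (2 * k + 2) + ∑ i ∈ Finset.Ico 1 n, (cseq k i + 1)

lemma phi_sq : phi ^ 2 = phi + 1 := Real.goldenRatio_sq

lemma sqrt5_sq : Real.sqrt 5 ^ 2 = 5 := Real.sq_sqrt (by norm_num)
lemma sqrt5_ge : (2:ℝ) ≤ Real.sqrt 5 := by nlinarith [sqrt5_sq, Real.sqrt_nonneg 5]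
lemma sqrt5_lt : Real.sqrt 5 < 7/3 := by nlinarith [sqrt5_sq, Real.sqrt_nonneg 5]

lemma phi_ge : (3/2 : ℝ) ≤ phi := by unfold phi; linarith [sqrt5_ge]
lemma phi_lt : phi < 5/3 := by unfold phi; linarith [sqrt5_lt]

lemma c_pos : 0 < phi - 1 := by linarith [phi_ge]
lemma c_lt_one : phi - 1 < 1 := by linarith [phi_lt]
lemma c_add_sq : (phi - 1) + (phi - 1)^2 = 1 := by linear_combination phi_sq
lemma c_pow_pos (j : ℕ) : 0 < (phi-1)^j := pow_pos c_pos j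
lemma c_pow_le (j : ℕ) : (phi-1)^(j+1) ≤ (phi-1)^j :=
  pow_le_pow_of_le_one (le_of_lt c_pos) (le_of_lt c_lt_one) (Nat.le_succ j)
lemma c_pow_id (j : ℕ) : (phi-1)^(j+1) + (phi-1)^(j+2) = (phi-1)^j := by
  linear_combination ((phi-1)^j) * c_add_sq

lemma floor_phi : ⌊phi⌋ = 1 := by
  rw [Int.floor_eq_iff]; push_cast; constructor <;> linarith [phi_ge, phi_lt]
lemma floor_two_phi : ⌊(2:ℝ) * phi⌋ = 3 := by
  rw [Int.floor_eq_iff]; push_cast; constructor <;> linarith [phi_ge, phi_lt]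
lemma floor_three_phi : ⌊(3:ℝ) * phi⌋ = 4 := by
  rw [Int.floor_eq_iff]; push_cast; constructor <;> linarith [phi_ge, phi_lt]

lemma fract_phi : Int.fract phi = phi - 1 := by
  have h := Int.floor_add_fract phi
  rw [floor_phi] at h; push_cast at h; linarith
lemma fract_two_phi : Int.fract ((2:ℝ) * phi) = 2 * phi - 3 := by
  have h := Int.floor_add_fract ((2:ℝ) * phi)
  rw [floor_two_phi] at h; push_cast at h; linarith

lemma fract_shift {x d : ℝ} (h1 : 0 ≤ Int.fract x + d) (h2 : Int.fract x + d < 1) :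
    Int.fract (x + d) = Int.fract x + d := by
  have hx : x + d = (Int.fract x + d) + (⌊x⌋ : ℤ) := by
    have h := Int.floor_add_fract x; push_cast; linarith
  rw [hx, Int.fract_add_intCast, Int.fract_eq_self.mpr ⟨h1, h2⟩]

lemma floor_shift {x d : ℝ} (h1 : 0 ≤ Int.fract x + d) (h2 : Int.fract x + d < 1) :
    ⌊x + d⌋ = ⌊x⌋ := by
  have hx : x + d = (Int.fract x + d) + (⌊x⌋ : ℤ) := by
    have h := Int.floor_add_fract x; push_cast; linarith
  rw [hx, Int.floor_add_intCast, Int.floor_eq_zero_iff.mpr (Set.mem_Ico.mpr ⟨h1, h2⟩), zero_add]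

lemma fib_phi : ∀ n : ℕ, (Nat.fib n : ℝ) * phi = (Nat.fib (n+1) : ℝ) - (1 - phi)^n := by
  have key : ∀ n : ℕ, ((Nat.fib n : ℝ) * phi = (Nat.fib (n+1) : ℝ) - (1 - phi)^n) ∧
      ((Nat.fib (n+1) : ℝ) * phi = (Nat.fib (n+2) : ℝ) - (1 - phi)^(n+1)) := by
    intro n
    induction n with
    | zero => norm_num
    | succ n ih =>
      obtain ⟨e1, e2⟩ := ih
      refine ⟨e2, ?_⟩
      have h2 : (Nat.fib (n+2) : ℝ) = Nat.fib n + Nat.fib (n+1) := by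
        rw [Nat.fib_add_two]; push_cast; ring
      have h3 : (Nat.fib (n+3) : ℝ) = Nat.fib (n+1) + Nat.fib (n+2) := by
        rw [Nat.fib_add_two (n := n+1)]; push_cast; ring
      have hpow : (1-phi)^n + (1-phi)^(n+1) = (1-phi)^(n+2) := by
        linear_combination (-(1-phi)^n) * phi_sq
      linear_combination e1 + e2 + phi * h2 - h3 - hpow
  exact fun n => (key n).1
lemma e2' : (phi-1)^2 = 2 - phi := by linear_combination phi_sq
lemma e3' : (phi-1)^3 = 2*phi - 3 := by linear_combination (phi - 2) * phi_sq


lemma gap : ∀ m : ℕ, 1 ≤ m → ∀ r : ℕ, 1 ≤ r → r ≤ Nat.fib (m+1) →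
    ((phi-1)^(m+1) ≤ Int.fract ((r:ℝ) * phi)) ∧
    (Int.fract ((r:ℝ) * phi) ≤ 1 - (phi-1)^(m+1)) ∧
    (¬ Even m → (phi-1)^m ≤ Int.fract ((r:ℝ) * phi)) ∧
    (Even m → Int.fract ((r:ℝ) * phi) ≤ 1 - (phi-1)^m) := by
  intro m
  induction m using Nat.strong_induction_on with
  | _ m ih =>
  intro hm r hr1 hr2
  by_cases hm1 : m = 1
  · subst hm1
    have hf2 : Nat.fib 2 = 1 := by decide
    rw [show (1:ℕ)+1 = 2 from rfl, hf2] at hr2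
    have : r = 1 := by omega
    subst this
    have hc : Int.fract (((1:ℕ):ℝ) * phi) = phi - 1 := by norm_num [fract_phi]
    rw [hc]
    exact ⟨(by linarith [e2', phi_ge] : (phi-1)^2 ≤ phi-1),
      (by linarith [e2'] : phi-1 ≤ 1 - (phi-1)^2),
      fun _ => le_of_eq (pow_one _),
      fun h => absurd h (by decide)⟩
  by_cases hm2 : m = 2
  · subst hm2
    have hf3 : Nat.fib 3 = 2 := by decide
    rw [show (2:ℕ)+1 = 3 from rfl, hf3] at hr2
    interval_cases r
    · have hc : Int.fract (((1:ℕ):ℝ) * phi) = phi - 1 := by norm_num [fract_phi]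
      rw [hc]
      exact ⟨(by linarith [e3', phi_lt] : (phi-1)^3 ≤ phi-1),
        (by linarith [e3', phi_lt] : phi-1 ≤ 1 - (phi-1)^3),
        fun h => absurd (by decide : Even 2) h,
        fun _ => (by linarith [e2'] : phi-1 ≤ 1 - (phi-1)^2)⟩
    · have hc : Int.fract (((2:ℕ):ℝ) * phi) = 2*phi - 3 := by
        rw [show ((2:ℕ):ℝ) = (2:ℝ) by norm_num, fract_two_phi]
      rw [hc]
      exact ⟨(by linarith [e3'] : (phi-1)^3 ≤ 2*phi-3),
        (by linarith [e3', phi_lt] : 2*phi-3 ≤ 1 - (phi-1)^3),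
        fun h => absurd (by decide : Even 2) h,
        fun _ => (by linarith [e2', phi_lt] : 2*phi-3 ≤ 1 - (phi-1)^2)⟩
  obtain ⟨n, rfl⟩ : ∃ n, m = n + 3 := ⟨m-3, by omega⟩
  rw [show n+3+1 = n+4 from rfl] at hr2
  by_cases hr : r ≤ Nat.fib (n+3)
  · obtain ⟨P1, P2, _, _⟩ := ih (n+2) (by omega) (by omega) r hr1 hr
    rw [show n+2+1 = n+3 from rfl] at P1 P2
    have hle : (phi-1)^(n+4) ≤ (phi-1)^(n+3) := c_pow_le _
    exact ⟨le_trans hle P1, le_trans P2 (by linarith), fun _ => P1, fun _ => P2⟩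
  · push_neg at hr
    have hnat : r = (r - Nat.fib (n+3)) + Nat.fib (n+3) := by omega
    set s := r - Nat.fib (n+3) with hs
    have hs1 : 1 ≤ s := by omega
    have hs2 : s ≤ Nat.fib (n+2) := by
      have h4 : Nat.fib (n+4) = Nat.fib (n+2) + Nat.fib (n+3) := by
        rw [show n+4 = (n+2)+2 from rfl, show n+3 = (n+2)+1 from rfl]; exact Nat.fib_add_two
      omega
    obtain ⟨R1, R2, _, _⟩ := ih (n+1) (by omega) (by omega) s hs1 hs2
    rw [show n+1+1 = n+2 from rfl] at R1 R2
    have hfib := fib_phi (n+3)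
    rw [show n+3+1 = n+4 from rfl] at hfib
    have key : (r:ℝ)*phi = ((s:ℝ)*phi + (-(1-phi)^(n+3))) + ((Nat.fib (n+4) : ℤ) : ℝ) := by
      rw [hnat]; push_cast; linear_combination hfib
    rw [key, Int.fract_add_intCast]
    have id1 := c_pow_id (n+2)
    have id2 := c_pow_id (n+1)
    rw [show n+2+1 = n+3 from rfl, show n+2+2 = n+4 from rfl] at id1
    rw [show n+1+1 = n+2 from rfl, show n+1+2 = n+3 from rfl] at id2
    have hfl := Int.fract_lt_one ((s:ℝ)*phi)
    have hfn := Int.fract_nonneg ((s:ℝ)*phi)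
    have hle3 : (phi-1)^(n+4) ≤ (phi-1)^(n+3) := c_pow_le _
    have hle2 : (phi-1)^(n+3) ≤ (phi-1)^(n+2) := c_pow_le _
    have hle1 : (phi-1)^(n+2) ≤ (phi-1)^(n+1) := c_pow_le _
    have hpos := c_pow_pos (n+4)
    rcases Nat.even_or_odd (n+3) with he | ho
    · have hpow : -(1-phi : ℝ)^(n+3) = -((phi-1)^(n+3)) := by
        rw [show (1-phi : ℝ) = -(phi-1) by ring, he.neg_pow]
      rw [hpow, fract_shift (by linarith) (by linarith [c_pow_pos (n+3)])]
      refine ⟨by linarith, by linarith, fun h => absurd he h, fun _ => by linarith⟩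
    · have hpow : -(1-phi : ℝ)^(n+3) = (phi-1)^(n+3) := by
        rw [show (1-phi : ℝ) = -(phi-1) by ring, ho.neg_pow]; ring
      rw [hpow, fract_shift (by linarith [c_pow_pos (n+3)]) (by linarith)]
      refine ⟨by linarith, by linarith, fun _ => by linarith,
        fun h => absurd ho (by simpa using h)⟩

lemma floorShift (m r : ℕ) (hm : 1 ≤ m) (hr1 : 1 ≤ r) (hr2 : r ≤ Nat.fib (m+1)) :
    ⌊((Nat.fib (m+1) + r : ℕ) : ℝ) * phi⌋ = (Nat.fib (m+2) : ℤ) + ⌊(r:ℝ) * phi⌋ := by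
  obtain ⟨P1, P2, P3, P4⟩ := gap m hm r hr1 hr2
  have hfib := fib_phi (m+1)
  have key : ((Nat.fib (m+1) + r : ℕ) : ℝ) * phi
      = ((r:ℝ)*phi + (-(1-phi)^(m+1))) + ((Nat.fib (m+2) : ℤ) : ℝ) := by
    push_cast; linear_combination hfib
  rw [key, Int.floor_add_intCast]
  have hfl := Int.fract_lt_one ((r:ℝ)*phi)
  have hfn := Int.fract_nonneg ((r:ℝ)*phi)
  have hid := c_pow_id m
  have hpos1 := c_pow_pos (m+1)
  have hpos2 := c_pow_pos (m+2)
  rcases Nat.even_or_odd m with he | ho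
  · have hpow : -(1-phi : ℝ)^(m+1) = (phi-1)^(m+1) := by
      rw [show (1-phi : ℝ) = -(phi-1) by ring, (Even.add_one he).neg_pow]; ring
    rw [hpow, floor_shift (by linarith) (by linarith [P4 he])]
    ring
  · have hpow : -(1-phi : ℝ)^(m+1) = -((phi-1)^(m+1)) := by
      rw [show (1-phi : ℝ) = -(phi-1) by ring, (Odd.add_one ho).neg_pow]
    rw [hpow, floor_shift (by linarith) (by linarith)]
    ring

/-- Two-step induction helper. -/
lemma two_step {P : ℕ → Prop} (h0 : P 0) (h1 : P 1) (hs : ∀ n, P n → P (n+1) → P (n+2)) :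
    ∀ n, P n := by
  have key : ∀ n, P n ∧ P (n+1) := by
    intro n
    induction n with
    | zero => exact ⟨h0, h1⟩
    | succ n ih => exact ⟨ih.2, hs n ih.1 ih.2⟩
  exact fun n => (key n).1


lemma fibWord_append (m : ℕ) : fibWord (m+2) = fibWord (m+1) ++ fibWord m := by
  induction m with
  | zero => decide
  | succ n ih =>
    show (fibWord (n+2)).flatMap subst = _
    conv_lhs => rw [ih, List.flatMap_append]
    rfl

lemma fibWord_length (m : ℕ) : (fibWord m).length = Nat.fib (m+1) := by
  induction m using two_step with
  | h0 => rfl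
  | h1 => rfl
  | hs n ih1 ih2 =>
    rw [show n+1+1 = n+2 from rfl] at ih2
    rw [fibWord_append, List.length_append, ih1, ih2]
    have h : Nat.fib (n+3) = Nat.fib (n+1) + Nat.fib (n+2) := Nat.fib_add_two
    show _ = Nat.fib (n+3)
    omega

lemma fibWord_sum (m : ℕ) : (fibWord m).sum = Nat.fib (m+2) := by
  induction m using two_step with
  | h0 => rfl
  | h1 => rfl
  | hs n ih1 ih2 =>
    rw [show n+1+2 = n+3 from rfl] at ih2
    rw [fibWord_append, List.sum_append, ih1, ih2]
    have h : Nat.fib (n+4) = Nat.fib (n+2) + Nat.fib (n+3) := Nat.fib_add_two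
    show _ = Nat.fib (n+4)
    omega

lemma fib_ge (n : ℕ) : n + 1 ≤ Nat.fib (n+2) := by
  induction n using two_step with
  | h0 => decide
  | h1 => decide
  | hs n ih1 ih2 =>
    rw [show n+1+2 = n+3 from rfl] at ih2
    rw [show n+2+2 = n+4 from rfl]
    have : Nat.fib (n+4) = Nat.fib (n+2) + Nat.fib (n+3) := by
      rw [show n+4 = (n+2)+2 from rfl, show n+3 = (n+2)+1 from rfl]; exact Nat.fib_add_two
    omega

lemma prefix_sum : ∀ m : ℕ, 1 ≤ m → ∀ t : ℕ, t ≤ Nat.fib (m+1) →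
    (((fibWord m).take t).sum : ℤ) = ⌊((t:ℝ) + 1) * phi⌋ - 1 := by
  intro m
  induction m using Nat.strong_induction_on with
  | _ m ih =>
  intro hm t ht
  by_cases hm1 : m = 1
  · subst hm1
    rw [show (1:ℕ)+1 = 2 from rfl, show Nat.fib 2 = 1 from rfl] at ht
    interval_cases t
    · have h1 : ((0:ℕ):ℝ) + 1 = 1 := by norm_num
      rw [h1, one_mul, floor_phi]
      simp
    · have h1 : ((1:ℕ):ℝ) + 1 = 2 := by norm_num
      rw [h1, fibWord, floor_two_phi]
      decide
  by_cases hm2 : m = 2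
  · subst hm2
    rw [show (2:ℕ)+1 = 3 from rfl, show Nat.fib 3 = 2 from rfl] at ht
    interval_cases t
    · have h1 : ((0:ℕ):ℝ) + 1 = 1 := by norm_num
      rw [h1, one_mul, floor_phi]
      simp
    · have h1 : ((1:ℕ):ℝ) + 1 = 2 := by norm_num
      rw [h1, floor_two_phi, show fibWord 2 = [2,1] from by decide]
      decide
    · have h1 : ((2:ℕ):ℝ) + 1 = 3 := by norm_num
      rw [h1, floor_three_phi, show fibWord 2 = [2,1] from by decide]
      decide
  obtain ⟨n, rfl⟩ : ∃ n, m = n + 3 := ⟨m-3, by omega⟩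
  rw [show n+3+1 = n+4 from rfl] at ht
  by_cases hc : t ≤ Nat.fib (n+3)
  · rw [show fibWord (n+3) = fibWord (n+2) ++ fibWord (n+1) from fibWord_append (n+1),
      List.take_append_of_le_length (by rw [fibWord_length, show n+2+1 = n+3 from rfl]; exact hc)]
    have := ih (n+2) (by omega) (by omega) t (by rw [show n+2+1 = n+3 from rfl]; exact hc)
    exact this
  · push_neg at hc
    have hnat : t = Nat.fib (n+3) + (t - Nat.fib (n+3)) := by omega
    set s := t - Nat.fib (n+3) with hs
    have hs1 : 1 ≤ s := by omega
    have hs2 : s ≤ Nat.fib (n+2) := by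
      have h4 : Nat.fib (n+4) = Nat.fib (n+2) + Nat.fib (n+3) := Nat.fib_add_two
      omega
    have e1 : (fibWord (n+3)).take t = fibWord (n+2) ++ (fibWord (n+1)).take s := by
      rw [show fibWord (n+3) = fibWord (n+2) ++ fibWord (n+1) from fibWord_append (n+1),
        show t = (fibWord (n+2)).length + s from by
          rw [fibWord_length, show n+2+1 = n+3 from rfl]; omega,
        List.take_length_add_append]
    rw [e1, List.sum_append, Nat.cast_add]
    have ihs := ih (n+1) (by omega) (by omega) s (by rw [show n+1+1 = n+2 from rfl]; exact hs2)
    have hfs : ((fibWord (n+2)).sum : ℤ) = Nat.fib (n+4) := by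
      rw [fibWord_sum, show n+2+2 = n+4 from rfl]
    have hfib1 : 1 ≤ Nat.fib (n+1) := Nat.fib_pos.mpr (by omega)
    have h3 : Nat.fib (n+3) = Nat.fib (n+1) + Nat.fib (n+2) := Nat.fib_add_two
    have hshift := floorShift (n+2) (s+1) (by omega) (by omega)
      (by rw [show n+2+1 = n+3 from rfl]; omega)
    rw [show n+2+1 = n+3 from rfl, show n+2+2 = n+4 from rfl] at hshift
    have harg : ((t:ℝ) + 1) = ((Nat.fib (n+3) + (s+1) : ℕ) : ℝ) := by
      rw [hnat]; push_cast; ring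
    have hcast : (((s+1 : ℕ)):ℝ) = (s:ℝ) + 1 := by push_cast; ring
    rw [hcast] at hshift
    rw [harg, hshift, hfs, ihs]
    ring

def Lk (k n : ℕ) : List ℕ := (List.range n).flatMap fun i => (List.replicate k (fibWord i)).flatten

lemma cseq_def (k n : ℕ) : cseq k n = (Lk k n).getD (n-1) 0 := rfl

lemma Lk_succ (k n : ℕ) : Lk k (n+1) = Lk k n ++ (List.replicate k (fibWord n)).flatten := by
  unfold Lk
  rw [List.range_succ, List.flatMap_append]
  simp

lemma flatten_replicate_length (h : ℕ) (w : List ℕ) :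
    ((List.replicate h w).flatten).length = h * w.length := by
  induction h with
  | zero => simp
  | succ h ih =>
    rw [List.replicate_succ, List.flatten_cons, List.length_append, ih]
    ring

lemma flatten_replicate_sum (h : ℕ) (w : List ℕ) :
    ((List.replicate h w).flatten).sum = h * w.sum := by
  induction h with
  | zero => simp
  | succ h ih =>
    rw [List.replicate_succ, List.flatten_cons, List.sum_append, ih]
    ring

lemma take_flatten_replicate (w : List ℕ) : ∀ (h k t : ℕ), h < k → t ≤ w.length →
    ((List.replicate k w).flatten).take (h * w.length + t)
      = (List.replicate h w).flatten ++ w.take t := by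
  intro h
  induction h with
  | zero =>
    intro k t hk ht
    obtain ⟨k', rfl⟩ : ∃ k', k = k'+1 := ⟨k-1, by omega⟩
    rw [List.replicate_succ, List.flatten_cons]
    simp only [Nat.zero_mul, Nat.zero_add, List.replicate_zero, List.flatten_nil,
      List.nil_append]
    exact List.take_append_of_le_length ht
  | succ h ih =>
    intro k t hk ht
    obtain ⟨k', rfl⟩ : ∃ k', k = k'+1 := ⟨k-1, by omega⟩
    rw [List.replicate_succ, List.flatten_cons,
      show (h+1) * w.length + t = w.length + (h * w.length + t) from by ring,
      List.take_length_add_append, ih k' t (by omega) ht,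
      List.replicate_succ, List.flatten_cons, List.append_assoc]

lemma Lk_length (k n : ℕ) : (Lk k n).length = k * (Nat.fib (n+2) - 1) := by
  induction n with
  | zero => simp [Lk]
  | succ n ih =>
    rw [Lk_succ, List.length_append, ih, flatten_replicate_length, fibWord_length]
    have h1 : 1 ≤ Nat.fib (n+2) := Nat.fib_pos.mpr (by omega)
    have h2 : Nat.fib (n+3) = Nat.fib (n+1) + Nat.fib (n+2) := Nat.fib_add_two
    calc k * (Nat.fib (n+2) - 1) + k * Nat.fib (n+1)
        = k * ((Nat.fib (n+2) - 1) + Nat.fib (n+1)) := (Nat.mul_add k _ _).symm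
      _ = k * (Nat.fib (n+1+2) - 1) := by congr 1; rw [show n+1+2 = n+3 from rfl]; omega

lemma Lk_sum (k n : ℕ) : (Lk k n).sum = k * (Nat.fib (n+3) - 2) := by
  induction n with
  | zero => simp [Lk, show Nat.fib 3 - 2 = 0 from rfl]
  | succ n ih =>
    rw [Lk_succ, List.sum_append, ih, flatten_replicate_sum, fibWord_sum]
    have h1 : 2 ≤ Nat.fib (n+3) := by have := fib_ge (n+1); rw [show n+1+2 = n+3 from rfl] at this; omega
    have h2 : Nat.fib (n+4) = Nat.fib (n+2) + Nat.fib (n+3) := Nat.fib_add_two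
    calc k * (Nat.fib (n+3) - 2) + k * Nat.fib (n+2)
        = k * ((Nat.fib (n+3) - 2) + Nat.fib (n+2)) := (Nat.mul_add k _ _).symm
      _ = k * (Nat.fib (n+1+3) - 2) := by congr 1; rw [show n+1+3 = n+4 from rfl]; omega

lemma Lk_prefix (k m d : ℕ) : ∃ u, Lk k (m + d) = Lk k m ++ u := by
  induction d with
  | zero => exact ⟨[], by simp⟩
  | succ d ih =>
    obtain ⟨u, hu⟩ := ih
    exact ⟨u ++ _, by rw [show m + (d+1) = (m+d)+1 from rfl, Lk_succ, hu, List.append_assoc]⟩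

lemma le_length_Lk (k n : ℕ) (hk : 1 ≤ k) : n ≤ (Lk k n).length := by
  rw [Lk_length]
  have h := fib_ge n
  calc n ≤ 1 * (Nat.fib (n+2) - 1) := by omega
    _ ≤ k * (Nat.fib (n+2) - 1) := Nat.mul_le_mul_right _ hk

lemma cseq_getD (k : ℕ) (hk : 1 ≤ k) (i m : ℕ) (hi : 1 ≤ i) (him : i ≤ (Lk k m).length) :
    cseq k i = (Lk k m).getD (i-1) 0 := by
  have hlen : i ≤ (Lk k i).length := le_length_Lk k i hk
  rcases le_total i m with h | h
  · obtain ⟨u, hu⟩ := Lk_prefix k i (m - i)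
    rw [show i + (m-i) = m from by omega] at hu
    rw [cseq_def, hu, List.getD_append _ _ _ _ (by omega)]
  · obtain ⟨u, hu⟩ := Lk_prefix k m (i - m)
    rw [show m + (i-m) = i from by omega] at hu
    rw [cseq_def, hu, List.getD_append _ _ _ _ (by omega)]

lemma sum_cseq (k : ℕ) (hk : 1 ≤ k) (m : ℕ) : ∀ N, N ≤ (Lk k m).length →
    ∑ i ∈ Finset.Ico 1 (N+1), cseq k i = ((Lk k m).take N).sum := by
  intro N
  induction N with
  | zero => simp
  | succ N ih =>
    intro hN
    rw [Finset.sum_Ico_succ_top (by omega)]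
    have hlt : N < (Lk k m).length := by omega
    rw [ih (by omega), cseq_getD k hk (N+1) m (by omega) (by omega),
      List.sum_take_succ _ _ hlt, show N+1-1 = N from rfl,
      List.getD_eq_getElem _ _ hlt]

lemma T_eq (n t : ℕ) (ht : t ≤ Nat.fib (n+1)) :
    (((fibWord n).take t).sum : ℤ) =
      ⌊((Nat.fib (n+2) : ℝ) + 1 + t) * phi⌋ - ⌊((Nat.fib (n+2) : ℝ) + 1) * phi⌋ := by
  have happ : fibWord (n+2) = fibWord (n+1) ++ fibWord n := fibWord_append n
  have hlen1 : (fibWord (n+1)).length = Nat.fib (n+2) := by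
    rw [fibWord_length, show n+1+1 = n+2 from rfl]
  have hfib1 : 1 ≤ Nat.fib (n+1) := Nat.fib_pos.mpr (by omega)
  have h3 : Nat.fib (n+3) = Nat.fib (n+1) + Nat.fib (n+2) := Nat.fib_add_two
  have h1 := prefix_sum (n+2) (by omega) (Nat.fib (n+2) + t)
    (by rw [show n+2+1 = n+3 from rfl]; omega)
  have h0 := prefix_sum (n+2) (by omega) (Nat.fib (n+2))
    (by rw [show n+2+1 = n+3 from rfl]; omega)
  have e1 : (fibWord (n+2)).take (Nat.fib (n+2) + t) = fibWord (n+1) ++ (fibWord n).take t := by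
    rw [happ, ← hlen1, List.take_length_add_append]
  have e0 : (fibWord (n+2)).take (Nat.fib (n+2)) = fibWord (n+1) := by
    rw [happ, ← hlen1, List.take_left]
  rw [e1, List.sum_append, Nat.cast_add, fibWord_sum, show n+1+2 = n+3 from rfl] at h1
  rw [e0, fibWord_sum, show n+1+2 = n+3 from rfl] at h0
  have harg : ((Nat.fib (n+2) + t : ℕ) : ℝ) + 1 = (Nat.fib (n+2):ℝ) + 1 + t := by
    push_cast; ring
  rw [harg] at h1
  linarith [h0, h1]

theorem stmt19 (k : ℕ) (hk : 1 ≤ k) :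
    (∀ n, 1 ≤ n → bseq k n = aseq k n + n + k) ∧
    (∀ n h t, 1 ≤ n → h ≤ k - 1 → 1 ≤ t → t ≤ Nat.fib n →
      (aseq k (k * (Nat.fib (n + 1) - 1) + h * Nat.fib n + t + 1) : ℤ) =
        k * Nat.fib (n + 2) - k + 1 + h * Nat.fib (n + 1) +
          ⌊((Nat.fib (n + 1) : ℝ) + 1 + t) * phi⌋ - ⌊((Nat.fib (n + 1) : ℝ) + 1) * phi⌋) := by
  constructor
  · intro n hn
    have hsplit : ∑ i ∈ Finset.Ico 1 n, (cseq k i + 1)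
        = (∑ i ∈ Finset.Ico 1 n, cseq k i) + (n - 1) := by
      rw [Finset.sum_add_distrib, Finset.sum_const, smul_eq_mul, mul_one, Nat.card_Ico]
    simp only [bseq, aseq, hsplit]
    omega
  · intro n h t hn hh ht1 ht2
    obtain ⟨n', rfl⟩ : ∃ n', n = n' + 1 := ⟨n-1, by omega⟩
    simp only [show n'+1+1 = n'+2 from rfl, show n'+1+2 = n'+3 from rfl] at *
    set N := k * (Nat.fib (n'+2) - 1) + h * Nat.fib (n'+1) + t with hN
    have hh' : h + 1 ≤ k := by omega
    have hfib1 : 1 ≤ Nat.fib (n'+1) := Nat.fib_pos.mpr (by omega)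
    have hfib2 : 1 ≤ Nat.fib (n'+2) := Nat.fib_pos.mpr (by omega)
    have h3 : Nat.fib (n'+3) = Nat.fib (n'+1) + Nat.fib (n'+2) := Nat.fib_add_two
    have h2fib : 2 ≤ Nat.fib (n'+3) := by
      have := fib_ge (n'+1); rw [show n'+1+2 = n'+3 from rfl] at this; omega
    have hmul : (h+1) * Nat.fib (n'+1) ≤ k * Nat.fib (n'+1) := Nat.mul_le_mul_right _ hh'
    have hNle : N ≤ (Lk k (n'+1)).length := by
      rw [Lk_length, show n'+1+2 = n'+3 from rfl]
      have e : k * (Nat.fib (n'+3) - 1) = k * (Nat.fib (n'+2) - 1) + k * Nat.fib (n'+1) := by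
        rw [← Nat.mul_add]
        congr 1
        omega
      rw [hN, e]
      have e2 : (h+1) * Nat.fib (n'+1) = h * Nat.fib (n'+1) + Nat.fib (n'+1) := by ring
      calc k * (Nat.fib (n'+2) - 1) + h * Nat.fib (n'+1) + t
          = k * (Nat.fib (n'+2) - 1) + (h * Nat.fib (n'+1) + t) := Nat.add_assoc _ _ _
        _ ≤ k * (Nat.fib (n'+2) - 1) + (h+1) * Nat.fib (n'+1) :=
            Nat.add_le_add_left (by rw [e2]; exact Nat.add_le_add_left ht2 _) _
        _ ≤ k * (Nat.fib (n'+2) - 1) + k * Nat.fib (n'+1) := Nat.add_le_add_left hmul _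
    have hsum := sum_cseq k hk (n'+1) N hNle
    have hdec : (Lk k (n'+1)).take N
        = Lk k n' ++ ((List.replicate h (fibWord n')).flatten ++ (fibWord n').take t) := by
      rw [Lk_succ,
        show N = (Lk k n').length + (h * (fibWord n').length + t) from by
          rw [Lk_length, fibWord_length, hN]; exact Nat.add_assoc _ _ _,
        List.take_length_add_append,
        take_flatten_replicate (fibWord n') h k t (by omega) (by rw [fibWord_length]; exact ht2)]
    have hs2 : ((Lk k (n'+1)).take N).sum
        = k * (Nat.fib (n'+3) - 2) + (h * Nat.fib (n'+2) + ((fibWord n').take t).sum) := by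
      rw [hdec, List.sum_append, List.sum_append, Lk_sum, flatten_replicate_sum, fibWord_sum]
    have haseq : aseq k (N+1)
        = (k+1) + (k * (Nat.fib (n'+3) - 2) + (h * Nat.fib (n'+2) + ((fibWord n').take t).sum)) := by
      simp only [aseq]; rw [hsum, hs2]
    have hT := T_eq n' t ht2
    rw [haseq]
    have hsplit2 : ((k + 1 + (k * (Nat.fib (n'+3) - 2)
          + (h * Nat.fib (n'+2) + ((fibWord n').take t).sum)) : ℕ) : ℤ)
        = (k:ℤ) + 1 + ((k:ℤ) * ((Nat.fib (n'+3):ℤ) - 2)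
          + ((h:ℤ) * ((Nat.fib (n'+2):ℤ)) + (((fibWord n').take t).sum : ℤ))) := by
      push_cast [Nat.cast_sub h2fib]
      ring
    rw [hsplit2, hT]
    ring
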